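/- arXiv:2205.03794 — 3 statements merged into one kernel-verified Lean document; each statement's English description precedes it below -/
import Mathlib

section
/- Let Φ be a continuous flow on a topological space X and A ⊆ X an open set. Then the first-out map E_A is at most two-to-one: for every y ∈ ∂A, the preimage E_A⁻¹(y) contains at most two points. -/
/-!
If `x₁` and `x₂` both leave `A` for the first time at `y`, at times `0 < t₂ ≤ t₁`, then the flow
carries `x₁` to `x₂` in time `t₁ - t₂`. As `x₂ ∉ A`, minimality of `t₁` forces `t₁ - t₂ = 0`, so
`x₁ = x₂`. Hence at most one point reaches `y` at a positive exit time, and a point with exit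
time `0` is `y` itself.
-/

noncomputable def firstExitTime {X : Type*} (Φ : ℝ → X → X) (A : Set X) (x : X) : ℝ :=
  sInf {t : ℝ | 0 < t ∧ Φ t x ∉ A}

section Flow

variable {X : Type*} {Φ : ℝ → X → X}

theorem flow_sub_apply_eq_of_apply_eq (hid : ∀ x, Φ 0 x = x)
    (hgrp : ∀ s t x, Φ (s + t) x = Φ s (Φ t x)) {s t : ℝ} {x x' : X} (h : Φ t x = Φ s x') :
    Φ (t - s) x = x' := by
  rw [sub_eq_neg_add, hgrp, h, ← hgrp, neg_add_cancel, hid]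

variable (Φ) (A : Set X)

theorem firstExitTime_nonneg (x : X) : 0 ≤ firstExitTime Φ A x :=
  Real.sInf_nonneg fun _ ht => ht.1.le

theorem firstExitTime_le {x : X} {t : ℝ} (ht : 0 < t) (hx : Φ t x ∉ A) :
    firstExitTime Φ A x ≤ t :=
  csInf_le ⟨0, fun _ hs => hs.1.le⟩ ⟨ht, hx⟩

variable {Φ}

theorem subsingleton_of_firstExitTime_pos (hid : ∀ x, Φ 0 x = x)
    (hgrp : ∀ s t x, Φ (s + t) x = Φ s (Φ t x)) (y : X) :
    {x | x ∉ A ∧ 0 < firstExitTime Φ A x ∧ Φ (firstExitTime Φ A x) x = y}.Subsingleton := by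
  intro x₁ hx₁ x₂ hx₂
  wlog hle : firstExitTime Φ A x₂ ≤ firstExitTime Φ A x₁ generalizing x₁ x₂
  · exact (this hx₂ hx₁ (le_of_not_ge hle)).symm
  have hflow : Φ (firstExitTime Φ A x₁ - firstExitTime Φ A x₂) x₁ = x₂ :=
    flow_sub_apply_eq_of_apply_eq hid hgrp (hx₁.2.2.trans hx₂.2.2.symm)
  obtain heq | hlt := hle.eq_or_lt
  · rwa [heq, sub_self, hid] at hflow
  · have := firstExitTime_le Φ A (sub_pos.2 hlt) (hflow ▸ hx₂.1)
    linarith [hx₂.2.1]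

end Flow

theorem stmt_2_general {X : Type*} [TopologicalSpace X] (Φ : ℝ → X → X)
    (hid : ∀ x, Φ 0 x = x)
    (hgrp : ∀ s t x, Φ (s + t) x = Φ s (Φ t x))
    (A : Set X) (hA : IsOpen A) (y : X) :
    {x : X | x ∈ frontier A ∧ {t : ℝ | 0 < t ∧ Φ t x ∉ A}.Nonempty ∧
      Φ (sInf {t : ℝ | 0 < t ∧ Φ t x ∉ A}) x = y}.encard ≤ 2 := by
  set P := {x | x ∉ A ∧ 0 < firstExitTime Φ A x ∧ Φ (firstExitTime Φ A x) x = y}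
  have hsub : {x : X | x ∈ frontier A ∧ {t : ℝ | 0 < t ∧ Φ t x ∉ A}.Nonempty ∧
      Φ (sInf {t : ℝ | 0 < t ∧ Φ t x ∉ A}) x = y} ⊆ insert y P := by
    rintro x ⟨hfr, -, hxy : Φ (firstExitTime Φ A x) x = y⟩
    obtain hzero | hpos := (firstExitTime_nonneg Φ A x).eq_or_lt
    · left
      rwa [← hzero, hid] at hxy
    · exact Or.inr ⟨(hA.frontier_eq ▸ hfr).2, hpos, hxy⟩
  calc _ ≤ (insert y P).encard := Set.encard_le_encard hsub
    _ ≤ P.encard + 1 := Set.encard_insert_le P y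
    _ ≤ 1 + 1 := by
      gcongr
      exact Set.encard_le_one_iff_subsingleton.2 (subsingleton_of_firstExitTime_pos A hid hgrp y)
    _ = 2 := by norm_num

/-- The first-out map `E_A` of an open set `A` is at most two-to-one: for each
`y ∈ ∂A`, the set of points in the domain of `E_A` mapped to `y` has at most
two elements. -/
theorem stmt_2 {X : Type*} [TopologicalSpace X] (Φ : ℝ → X → X)
    (hcont : Continuous fun p : ℝ × X => Φ p.1 p.2)
    (hid : ∀ x, Φ 0 x = x)
    (hgrp : ∀ s t x, Φ (s + t) x = Φ s (Φ t x))
    (A : Set X) (hA : IsOpen A) (y : X) (hy : y ∈ frontier A) :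
    {x : X | x ∈ frontier A ∧ {t : ℝ | 0 < t ∧ Φ t x ∉ A}.Nonempty ∧
      Φ (sInf {t : ℝ | 0 < t ∧ Φ t x ∉ A}) x = y}.encard ≤ 2 :=
  stmt_2_general Φ hid hgrp A hA y
end

section
/- Let Φ be a flow on X and A ⊆ X an open set. Then A is backward invariant (i.e., Φ(t,x) ∈ A for all x ∈ A and all t ≤ 0) if and only if every point x ∈ ∂A satisfies: E_A(x) = x and R_{Ā}(x) is undefined (equivalently, the forward orbit of x never enters A). -/
/-!
Backward invariance of `A` says that an orbit can never pass from `Aᶜ` into `A`.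
If some orbit does so between times `t ≤ 0` and `0`, connectedness of `[t, 0]`
gives a time `c ≤ 0` at which it sits on `∂A`, and that boundary point then reaches `A`
at the positive time `-c`. Conversely, for open `A` a boundary point lies outside `A`,
so if it reached `A` in forward time, flowing back would carry a point of `A` out of `A`.
-/

open Set

theorem IsPreconnected.inter_frontier_nonempty {X : Type*} [TopologicalSpace X] {s t : Set X}
    (hs : IsPreconnected s) (hst : (s ∩ t).Nonempty) (hs't : (s \ t).Nonempty) :
    (s ∩ frontier t).Nonempty := by
  by_contra hempty
  have hfr : ∀ x ∈ s, x ∉ frontier t := fun x hx hxf => hempty ⟨x, hx, hxf⟩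
  have hcover : s ⊆ interior t ∪ (closure t)ᶜ := by
    intro x hx
    by_cases hcl : x ∈ closure t
    · exact .inl (by_contra fun hint => hfr x hx ⟨hcl, hint⟩)
    · exact .inr hcl
  obtain ⟨x, hxs, hxt⟩ := hst
  obtain ⟨y, hys, hyt⟩ := hs't
  obtain ⟨z, -, hzi, hzc⟩ := hs _ _ isOpen_interior isClosed_closure.isOpen_compl hcover
    ⟨x, hxs, (hcover hxs).resolve_right (not_not.mpr (subset_closure hxt))⟩
    ⟨y, hys, (hcover hys).resolve_left fun hyi => hyt (interior_subset hyi)⟩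
  exact hzc (interior_subset.trans subset_closure hzi)

theorem flow_neg_apply_apply {X : Type*} {Φ : ℝ → X → X} (hid : ∀ x, Φ 0 x = x)
    (hgrp : ∀ s t x, Φ (s + t) x = Φ s (Φ t x)) (t : ℝ) (x : X) : Φ (-t) (Φ t x) = x := by
  rw [← hgrp, neg_add_cancel, hid]

/-- An open set `A` is backward invariant if and only if every boundary point
is of type B, i.e. its forward orbit never enters `A` (equivalently, `E_A`
fixes it and `R_Ā` is undefined). -/
theorem stmt_8 {X : Type*} [TopologicalSpace X] (Φ : ℝ → X → X)
    (hcont : Continuous fun p : ℝ × X => Φ p.1 p.2)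
    (hid : ∀ x, Φ 0 x = x)
    (hgrp : ∀ s t x, Φ (s + t) x = Φ s (Φ t x))
    (A : Set X) (hA : IsOpen A) :
    (∀ x ∈ A, ∀ t : ℝ, t ≤ 0 → Φ t x ∈ A) ↔
    (∀ x ∈ frontier A, ∀ t : ℝ, 0 ≤ t → Φ t x ∉ A) := by
  constructor
  · intro hinv x hx t _ htx
    have hxA : x ∈ A := flow_neg_apply_apply hid hgrp t x ▸ hinv _ htx (-t) (by linarith)
    exact (disjoint_frontier_iff_isOpen.mpr hA).notMem_of_mem_left hx hxA
  · intro hB x hx t ht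
    by_contra htx
    have horbit : Continuous fun s : ℝ => Φ s x := hcont.comp (.prodMk_left x)
    obtain ⟨_, ⟨c, hc, rfl⟩, hcA⟩ :=
      (isPreconnected_uIcc.image _ horbit.continuousOn).inter_frontier_nonempty
        ⟨x, ⟨0, right_mem_uIcc, hid x⟩, hx⟩ ⟨Φ t x, ⟨t, left_mem_uIcc, rfl⟩, htx⟩
    have hc0 : c ≤ 0 := (uIcc_of_le ht ▸ hc).2
    exact hB _ hcA (-c) (by linarith) ((flow_neg_apply_apply hid hgrp c x).symm ▸ hx)
end

section
/- Let Φ be a flow on X and A ⊆ X an open set. If every point x ∈ ∂A satisfies Φ(t,x) ∉ A for all t > 0 (type B), then A is backward invariant: for every x ∉ A and every t > 0, Φ(t,x) ∉ A. -/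
open Set

theorem IsPreconnected.inter_frontier_nonempty_s9 {X : Type*} [TopologicalSpace X] {S A : Set X}
    (hS : IsPreconnected S) (hSA : (S ∩ A).Nonempty) (hSA' : (S \ A).Nonempty) :
    (S ∩ frontier A).Nonempty := by
  have := Subtype.preconnectedSpace hS
  obtain ⟨x, hxA⟩ := hSA
  obtain ⟨y, hyA⟩ := hSA'
  obtain ⟨z, hz⟩ := (nonempty_frontier_iff (s := ((↑) : S → X) ⁻¹' A)).2
    ⟨⟨⟨x, hxA.1⟩, hxA.2⟩, (ne_univ_iff_exists_notMem _).2 ⟨⟨y, hyA.1⟩, hyA.2⟩⟩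
  exact ⟨z, z.2, continuous_subtype_val.frontier_preimage_subset A hz⟩

theorem exists_mem_Icc_mem_frontier_of_continuousOn {X : Type*} [TopologicalSpace X]
    {γ : ℝ → X} {A : Set X} {a b : ℝ} (hab : a ≤ b) (hγ : ContinuousOn γ (Icc a b))
    (ha : γ a ∉ A) (hb : γ b ∈ A) : ∃ s ∈ Icc a b, γ s ∈ frontier A := by
  obtain ⟨_, ⟨s, hs, rfl⟩, hsA⟩ := (isPreconnected_Icc.image γ hγ).inter_frontier_nonempty_s9
    ⟨γ b, mem_image_of_mem γ (right_mem_Icc.2 hab), hb⟩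
    ⟨γ a, mem_image_of_mem γ (left_mem_Icc.2 hab), ha⟩
  exact ⟨s, hs, hsA⟩

/-- If every boundary point of an open set `A` is of type B (its forward orbit
never enters `A`), then `A` is backward invariant: no point outside `A` ever
flows into `A` in forward time. -/
theorem stmt_9 {X : Type*} [TopologicalSpace X] (Φ : ℝ → X → X)
    (hcont : Continuous fun p : ℝ × X => Φ p.1 p.2)
    (hid : ∀ x, Φ 0 x = x)
    (hgrp : ∀ s t x, Φ (s + t) x = Φ s (Φ t x))
    (A : Set X) (hA : IsOpen A)
    (hB : ∀ x ∈ frontier A, ∀ t : ℝ, 0 < t → Φ t x ∉ A) :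
    ∀ x ∉ A, ∀ t : ℝ, 0 < t → Φ t x ∉ A := by
  intro x hx t ht hxt
  have horbit : Continuous fun s => Φ s x := hcont.comp (continuous_id.prodMk continuous_const)
  obtain ⟨s, ⟨-, hs_le⟩, hs_frontier⟩ := exists_mem_Icc_mem_frontier_of_continuousOn ht.le
    horbit.continuousOn (by rwa [hid]) hxt
  have hs_notMem : Φ s x ∉ A := (hA.frontier_eq ▸ hs_frontier).2
  have hs_lt : s < t := hs_le.lt_of_ne (by rintro rfl; exact hs_notMem hxt)
  exact hB _ hs_frontier (t - s) (sub_pos.2 hs_lt) (by rwa [← hgrp, sub_add_cancel])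
end
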